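/- arXiv:2302.01605 — 2 statements merged into one kernel-verified Lean document; each statement's English description precedes it below -/
import Mathlib

section
/- Consider a single-agent finite MDP with transition kernel P', discount γ ∈ [0,1), temperature α > 0, and a fixed everywhere-positive policy π. Define the advantage A(s,a) = α(log π(a|s) - log π(a*(s)|s)) where a*(s) = argmax_a π(a|s), choose any function b : S → ℝ, define the soft value V via V(s) = E[Σ_t γ^t (Σ_{a'} π(a'|s_t)A(s_t,a') + b(s_t) + α·H(π(·|s_t))) | s_0 = s, a_t = a*(s_t)], set V*(s) = V(s) - Σ_a π(a|s)A(s,a) - α·H(π(·|s)), and define the reward R(s,a) = A(s,a) + V*(s) - γ·E_{s' ~ P'(·|s,a)}[V(s')]. Then R(s, a*(s)) = b(s) for all s, and the Q-function Q(s,a) = R(s,a) + γ·E_{s'~P'(·|s,a)}[V(s')] satisfies π(a|s) ∝ exp(Q(s,a)/α) for every state s. -/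
noncomputable def entropy {A : Type*} [Fintype A] (d : A → ℝ) : ℝ :=
  -∑ a, d a * Real.log (d a)

/-- Distribution over states at time `t`, starting from state `s`, when the
deterministic policy `astar` is followed in a single-agent MDP with transition
kernel `P'`. -/
noncomputable def visitDist {S A : Type*} [Fintype S] [DecidableEq S]
    (P' : S → A → S → ℝ) (astar : S → A) : ℕ → S → S → ℝ
  | 0, s => fun s' => if s' = s then 1 else 0
  | (n + 1), s => fun s'' => ∑ s', visitDist P' astar n s s' * P' s' (astar s') s''

/-!
Along the deterministic policy `a*` the soft value `V` is the discounted value of the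
per-step reward `f s = Σₐ π(a|s) A(s,a) + b(s) + α H(π(·|s))` under the row-stochastic
matrix `M s s' = P'(s' | s, a*(s))`, so it satisfies the Bellman equation
`V = f + γ M V`. Since `A(s, a*(s)) = 0`, this equation is exactly `R(s, a*(s)) = b(s)`.
The continuation terms cancel in `Q`, leaving `Q(s,a) = α log π(a|s) + c(s)`, which is
the Gibbs form `π(·|s) ∝ exp(Q(s,·)/α)`.
-/

open Matrix

namespace Matrix

variable {n : Type*} [Fintype n] [DecidableEq n] {M : Matrix n n ℝ}

lemma abs_mulVec_le_of_mem_rowStochastic (hM : M ∈ rowStochastic ℝ n) (f : n → ℝ) (i : n) :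
    |(M *ᵥ f) i| ≤ ∑ j, |f j| :=
  calc |(M *ᵥ f) i| ≤ ∑ j, |M i j * f j| := Finset.abs_sum_le_sum_abs _ _
    _ ≤ ∑ j, |f j| := Finset.sum_le_sum fun j _ => by
        rw [abs_mul, abs_of_nonneg (nonneg_of_mem_rowStochastic hM)]
        exact mul_le_of_le_one_left (abs_nonneg _) (le_one_of_mem_rowStochastic hM)

noncomputable def discountedValue (M : Matrix n n ℝ) (γ : ℝ) (f : n → ℝ) (i : n) : ℝ :=
  ∑' t : ℕ, γ ^ t * (M ^ t *ᵥ f) i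

variable {γ : ℝ}

lemma summable_geometric_mul_pow_mulVec (hM : M ∈ rowStochastic ℝ n) (hγ : |γ| < 1)
    (f : n → ℝ) (i : n) : Summable fun t : ℕ => γ ^ t * (M ^ t *ᵥ f) i := by
  refine Summable.of_norm_bounded
    ((summable_geometric_of_lt_one (abs_nonneg γ) hγ).mul_right (∑ j, |f j|)) fun t => ?_
  rw [norm_mul, norm_pow, Real.norm_eq_abs, Real.norm_eq_abs]
  exact mul_le_mul_of_nonneg_left (abs_mulVec_le_of_mem_rowStochastic (pow_mem hM t) f i)
    (pow_nonneg (abs_nonneg γ) t)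

theorem discountedValue_eq_add_mulVec (hM : M ∈ rowStochastic ℝ n) (hγ : |γ| < 1)
    (f : n → ℝ) :
    discountedValue M γ f = f + γ • (M *ᵥ discountedValue M γ f) := by
  have hsum := summable_geometric_mul_pow_mulVec hM hγ f
  funext i
  have hstep : ∀ t : ℕ, γ ^ (t + 1) * (M ^ (t + 1) *ᵥ f) i
      = ∑ j, γ * M i j * (γ ^ t * (M ^ t *ᵥ f) j) := fun t => by
    rw [pow_succ' γ, pow_succ' M, ← mulVec_mulVec]
    show γ * γ ^ t * ∑ j, M i j * (M ^ t *ᵥ f) j = _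
    rw [Finset.mul_sum]
    exact Finset.sum_congr rfl fun j _ => by ring
  rw [discountedValue, (hsum i).tsum_eq_zero_add, tsum_congr hstep,
    Summable.tsum_finsetSum fun j _ => (hsum j).mul_left _]
  simp only [pow_zero, one_mulVec, one_mul, tsum_mul_left, Pi.add_apply, Pi.smul_apply,
    smul_eq_mul]
  rw [mulVec, dotProduct, Finset.mul_sum]
  simp only [discountedValue, mul_assoc]

end Matrix

section MDP

variable {S A : Type*}

def transitionMatrix (P' : S → A → S → ℝ) (astar : S → A) : Matrix S S ℝ :=
  of fun s s' => P' s (astar s) s'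

variable [Fintype S] [DecidableEq S]

lemma transitionMatrix_mem_rowStochastic {P' : S → A → S → ℝ} {astar : S → A}
    (hP' : ∀ s, (∀ s', 0 ≤ P' s (astar s) s') ∧ ∑ s', P' s (astar s) s' = 1) :
    transitionMatrix P' astar ∈ rowStochastic ℝ S :=
  mem_rowStochastic_iff_sum.2 ⟨fun s s' => (hP' s).1 s', fun s => (hP' s).2⟩

lemma visitDist_eq_pow (P' : S → A → S → ℝ) (astar : S → A) (t : ℕ) :
    visitDist P' astar t = transitionMatrix P' astar ^ t := by
  induction t with
  | zero => funext s s'; simp [visitDist, one_apply, eq_comm]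
  | succ t ih => funext s s''; rw [pow_succ, mul_apply, ← ih]; rfl

end MDP

lemma exists_pos_eq_mul_exp_div {ι : Type*} {p q : ι → ℝ} {α : ℝ} (hp : ∀ i, 0 < p i)
    (hα : α ≠ 0) (c : ℝ) (hq : ∀ i, q i = α * Real.log (p i) + c) :
    ∃ k : ℝ, 0 < k ∧ ∀ i, p i = k * Real.exp (q i / α) :=
  ⟨Real.exp (-c / α), Real.exp_pos _, fun i => by
    rw [← Real.exp_add, hq, show -c / α + (α * Real.log (p i) + c) / α = Real.log (p i) by
      field_simp; ring, Real.exp_log (hp i)]⟩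

theorem reward_construction_makes_policy_softmax_general
    {S A : Type*} [Fintype S] [Fintype A] [DecidableEq S]
    (P' : S → A → S → ℝ) (γ α : ℝ) (π : S → A → ℝ) (astar : S → A)
    (b : S → ℝ) (Adv : S → A → ℝ) (V Vstar : S → ℝ) (R Q : S → A → ℝ)
    (hP' : ∀ s a, (∀ s', 0 ≤ P' s a s') ∧ ∑ s', P' s a s' = 1)
    (hπpos : ∀ s a, 0 < π s a)
    (hγ0 : 0 ≤ γ) (hγ1 : γ < 1) (hα : 0 < α)
    (hAdv : ∀ s a, Adv s a = α * (Real.log (π s a) - Real.log (π s (astar s))))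
    (hV : ∀ s, V s = ∑' t : ℕ, γ ^ t * ∑ s', visitDist P' astar t s s' *
      ((∑ a, π s' a * Adv s' a) + b s' + α * entropy (π s')))
    (hVstar : ∀ s, Vstar s = V s - (∑ a, π s a * Adv s a) - α * entropy (π s))
    (hR : ∀ s a, R s a = Adv s a + Vstar s - γ * ∑ s', P' s a s' * V s')
    (hQ : ∀ s a, Q s a = R s a + γ * ∑ s', P' s a s' * V s') :
    (∀ s, R s (astar s) = b s) ∧
    (∀ s, ∃ c : ℝ, 0 < c ∧ ∀ a, π s a = c * Real.exp (Q s a / α)) := by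
  set f : S → ℝ := fun s => (∑ a, π s a * Adv s a) + b s + α * entropy (π s)
  have hV_eq : V = discountedValue (transitionMatrix P' astar) γ f := funext fun s => by
    simp only [hV, discountedValue, visitDist_eq_pow]; rfl
  have hBellman : ∀ s, V s = f s + γ * ∑ s', P' s (astar s) s' * V s' := fun s => by
    rw [hV_eq]
    exact congrFun (discountedValue_eq_add_mulVec
      (transitionMatrix_mem_rowStochastic fun s => hP' s (astar s))
      (abs_lt.2 ⟨by linarith, hγ1⟩) f) s
  refine ⟨fun s => ?_, fun s => ?_⟩
  · rw [hR, hVstar, hAdv, sub_self, mul_zero]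
    linarith [hBellman s]
  · exact exists_pos_eq_mul_exp_div (hπpos s) hα.ne' (Vstar s - α * Real.log (π s (astar s)))
      fun a => by rw [hQ, hR, hAdv]; ring

/-- Reward construction for a fixed everywhere-positive policy `π` in a
single-agent finite MDP: with the advantage
`A(s,a) = α(log π(a|s) − log π(a*(s)|s))`, an arbitrary `b : S → ℝ`, the soft
value `V(s) = E[Σ_t γ^t (Σ_a' π(a'|s_t)A(s_t,a') + b(s_t) + αH(π(·|s_t))) | s_0 = s, a_t = a*(s_t)]`,
`V*(s) = V(s) − Σ_a π(a|s)A(s,a) − αH(π(·|s))`, and the reward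
`R(s,a) = A(s,a) + V*(s) − γ E_{s'∼P'(·|s,a)}[V(s')]`, one has
`R(s, a*(s)) = b(s)` for all `s`, and `π(·|s) ∝ exp(Q(s,·)/α)` where
`Q(s,a) = R(s,a) + γ E_{s'∼P'(·|s,a)}[V(s')]`. -/
theorem reward_construction_makes_policy_softmax
    {S A : Type*} [Fintype S] [Fintype A] [Nonempty S] [Nonempty A] [DecidableEq S]
    (P' : S → A → S → ℝ) (γ α : ℝ) (π : S → A → ℝ) (astar : S → A)
    (b : S → ℝ) (Adv : S → A → ℝ) (V Vstar : S → ℝ) (R Q : S → A → ℝ)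
    (hP' : ∀ s a, (∀ s', 0 ≤ P' s a s') ∧ ∑ s', P' s a s' = 1)
    (hπpos : ∀ s a, 0 < π s a) (hπsum : ∀ s, ∑ a, π s a = 1)
    (hastar : ∀ s a, π s a ≤ π s (astar s))
    (hγ0 : 0 ≤ γ) (hγ1 : γ < 1) (hα : 0 < α)
    (hAdv : ∀ s a, Adv s a = α * (Real.log (π s a) - Real.log (π s (astar s))))
    (hV : ∀ s, V s = ∑' t : ℕ, γ ^ t * ∑ s', visitDist P' astar t s s' *
      ((∑ a, π s' a * Adv s' a) + b s' + α * entropy (π s')))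
    (hVstar : ∀ s, Vstar s = V s - (∑ a, π s a * Adv s a) - α * entropy (π s))
    (hR : ∀ s a, R s a = Adv s a + Vstar s - γ * ∑ s', P' s a s' * V s')
    (hQ : ∀ s a, Q s a = R s a + γ * ∑ s', P' s a s' * V s') :
    (∀ s, R s (astar s) = b s) ∧
    (∀ s, ∃ c : ℝ, 0 < c ∧ ∀ a, π s a = c * Real.exp (Q s a / α)) :=
  reward_construction_makes_policy_softmax_general P' γ α π astar b Adv V Vstar R Q hP' hπpos hγ0
    hγ1 hα hAdv hV hVstar hR hQ
end

section
/- In a finite MDP with reward R, discount γ ∈ [0,1), and temperature α > 0, suppose V : S → ℝ and Q(s,a) = R(s,a) + γ·E_{s'~P(·|s,a)}[V(s')] satisfy: π(a|s) ∝ exp(Q(s,a)/α) and V(s) = Σ_a π(a|s)Q(s,a) + α·H(π(·|s)). Then V is a fixed point of the soft Bellman optimality operator (T*V)(s) = max_{d ∈ Δ(A)} [α·H(d) + Σ_a d(a)(R(s,a) + γ·E_{s'~P(·|s,a)}[V(s')])]. -/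
section Gibbs

open Real

lemma mul_log_sub_log_le_sub {x y : ℝ} (hx : 0 ≤ x) (hy : 0 < y) :
    x * (log y - log x) ≤ y - x := by
  rcases hx.eq_or_lt with rfl | hx
  · simpa using hy.le
  calc x * (log y - log x) = x * log (y / x) := by rw [log_div hy.ne' hx.ne']
    _ ≤ x * (y / x - 1) := mul_le_mul_of_nonneg_left (log_le_sub_one_of_pos (by positivity)) hx.le
    _ = y - x := by field_simp

/-- Gibbs' inequality. -/
lemma sum_mul_log_sub_log_nonpos {A : Type*} [Fintype A] {d p : A → ℝ}
    (hd : ∀ a, 0 ≤ d a) (hp : ∀ a, 0 < p a) (hmass : ∑ a, p a = ∑ a, d a) :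
    ∑ a, d a * (log (p a) - log (d a)) ≤ 0 :=
  calc ∑ a, d a * (log (p a) - log (d a)) ≤ ∑ a, (p a - d a) :=
        Finset.sum_le_sum fun a _ => mul_log_sub_log_le_sub (hd a) (hp a)
    _ = 0 := by rw [Finset.sum_sub_distrib, hmass, sub_self]

variable {A : Type*} [Fintype A] {q p : A → ℝ} {α c : ℝ}

lemma mul_entropy_add_sum_mul_eq (hα : α ≠ 0) (hc : 0 < c)
    (hp : ∀ a, p a = c * exp (q a / α)) {d : A → ℝ} (hd : ∑ a, d a = 1) :
    α * entropy d + ∑ a, d a * q a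
      = α * ∑ a, d a * (log (p a) - log (d a)) - α * log c := by
  have hlog : ∀ a, log (p a) = log c + q a / α := fun a => by
    rw [hp a, log_mul hc.ne' (exp_pos _).ne', log_exp]
  simp only [hlog, entropy]
  have hsplit : ∀ a, d a * (log c + q a / α - log (d a))
      = d a * log c + d a * q a / α - d a * log (d a) := fun a => by ring
  simp only [hsplit, Finset.sum_sub_distrib, Finset.sum_add_distrib, ← Finset.sum_mul,
    ← Finset.sum_div, hd]
  field_simp
  ring

lemma isGreatest_mul_entropy_add_sum_mul (hα : 0 < α) (hc : 0 < c)
    (hp : ∀ a, p a = c * exp (q a / α)) (hp1 : ∑ a, p a = 1) :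
    IsGreatest {v : ℝ | ∃ d : A → ℝ, (∀ a, 0 ≤ d a) ∧ (∑ a, d a = 1) ∧
        v = α * entropy d + ∑ a, d a * q a}
      (α * entropy p + ∑ a, p a * q a) := by
  have hppos : ∀ a, 0 < p a := fun a => by rw [hp a]; positivity
  refine ⟨⟨p, fun a => (hppos a).le, hp1, rfl⟩, ?_⟩
  rintro v ⟨d, hd0, hd1, rfl⟩
  have hkl := sum_mul_log_sub_log_nonpos hd0 hppos (hp1.trans hd1.symm)
  have hself : ∑ a, p a * (log (p a) - log (p a)) = 0 := by simp
  rw [mul_entropy_add_sum_mul_eq hα.ne' hc hp hd1, mul_entropy_add_sum_mul_eq hα.ne' hc hp hp1,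
    hself]
  linarith [mul_nonpos_of_nonneg_of_nonpos hα.le hkl]

end Gibbs

theorem soft_value_fixed_point_of_bellman_operator_general
    {S A : Type*} [Fintype S] [Fintype A]
    (P : S → A → S → ℝ) (R : S → A → ℝ) (γ α : ℝ)
    (π : S → A → ℝ) (V : S → ℝ) (Q : S → A → ℝ)
    (hα : 0 < α)
    (hπ : ∀ s, (∀ a, 0 ≤ π s a) ∧ ∑ a, π s a = 1)
    (hQ : ∀ s a, Q s a = R s a + γ * ∑ s', P s a s' * V s')
    (hprop : ∀ s, ∃ c : ℝ, 0 < c ∧ ∀ a, π s a = c * Real.exp (Q s a / α))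
    (hV : ∀ s, V s = (∑ a, π s a * Q s a) + α * entropy (π s)) :
    ∀ s, IsGreatest
      {v : ℝ | ∃ d : A → ℝ, (∀ a, 0 ≤ d a) ∧ (∑ a, d a = 1) ∧
        v = α * entropy d + ∑ a, d a * (R s a + γ * ∑ s', P s a s' * V s')}
      (V s) := by
  intro s
  obtain ⟨c, hc, hcπ⟩ := hprop s
  simp only [← hQ s]
  rw [hV s, add_comm]
  exact isGreatest_mul_entropy_add_sum_mul hα hc hcπ (hπ s).2

/-- If `π(·|s) ∝ exp(Q(s,·)/α)` with `Q(s,a) = R(s,a) + γ E_{s'∼P(·|s,a)}[V(s')]`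
and `V(s) = Σ_a π(a|s) Q(s,a) + α H(π(·|s))`, then `V` is a fixed point of the
soft Bellman optimality operator
`(T*V)(s) = max_{d ∈ Δ(A)} [α H(d) + Σ_a d(a)(R(s,a) + γ E_{s'∼P(·|s,a)}[V(s')])]`. -/
theorem soft_value_fixed_point_of_bellman_operator
    {S A : Type*} [Fintype S] [Fintype A] [Nonempty S] [Nonempty A]
    (P : S → A → S → ℝ) (R : S → A → ℝ) (γ α : ℝ)
    (π : S → A → ℝ) (V : S → ℝ) (Q : S → A → ℝ)
    (hP : ∀ s a, (∀ s', 0 ≤ P s a s') ∧ ∑ s', P s a s' = 1)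
    (hγ0 : 0 ≤ γ) (hγ1 : γ < 1) (hα : 0 < α)
    (hπ : ∀ s, (∀ a, 0 ≤ π s a) ∧ ∑ a, π s a = 1)
    (hQ : ∀ s a, Q s a = R s a + γ * ∑ s', P s a s' * V s')
    (hprop : ∀ s, ∃ c : ℝ, 0 < c ∧ ∀ a, π s a = c * Real.exp (Q s a / α))
    (hV : ∀ s, V s = (∑ a, π s a * Q s a) + α * entropy (π s)) :
    ∀ s, IsGreatest
      {v : ℝ | ∃ d : A → ℝ, (∀ a, 0 ≤ d a) ∧ (∑ a, d a = 1) ∧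
        v = α * entropy d + ∑ a, d a * (R s a + γ * ∑ s', P s a s' * V s')}
      (V s) :=
  soft_value_fixed_point_of_bellman_operator_general P R γ α π V Q hα hπ hQ hprop hV
end
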